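/- Let n ≥ 5 be an odd integer and let ω_A = ½(ω_{(n−1)/2}^n + ω_{(n+1)/2}^n) ∈ Ω_n. There is no finite family of perfectly distinguishable extreme points σ₁,…,σ_m of Ω_n and probability weight (p₁,…,p_m) with ω_A = Σ_k p_k σ_k; i.e., ω_A cannot be decomposed into perfectly distinguishable pure states. -/

import Mathlib

open Real

noncomputable section

/-- The ambient vector space ℝ³. -/
abbrev V3 : Type := Fin 3 → ℝ

/-- The linear functional on ℝ³ given by the Euclidean inner product with `v`. -/
def dotL (v : V3) : V3 →ₗ[ℝ] ℝ :=
  ∑ i, v i • (LinearMap.proj i : V3 →ₗ[ℝ] ℝ)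

/-- The unit effect `u (x, y, z) = z`. -/
def uEff : V3 →ₗ[ℝ] ℝ := LinearMap.proj 2

/-- `e` is an effect on `Ω`: a linear functional with values in `[0,1]` on `Ω`. -/
def IsEffect (Ω : Set V3) (e : V3 →ₗ[ℝ] ℝ) : Prop :=
  ∀ ω ∈ Ω, 0 ≤ e ω ∧ e ω ≤ 1

/-- The states `ω 0, …, ω (l-1)` are perfectly distinguishable in `Ω`:
there are effects summing to the unit effect with `e i (ω j) = δ_{ij}`. -/
def PerfDist (Ω : Set V3) {l : ℕ} (ω : Fin l → V3) : Prop :=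
  ∃ e : Fin l → (V3 →ₗ[ℝ] ℝ),
    (∀ i, IsEffect Ω (e i)) ∧ (∑ i, e i) = uEff ∧
    ∀ i j, e i (ω j) = if i = j then 1 else 0

/-- `S` is an entropy of mixing on `Ω`: it vanishes on extreme points, and for every
finite family of perfectly distinguishable states and every probability weight,
`S (Σ pᵢ ωᵢ) = Σ pᵢ S(ωᵢ) − Σ pᵢ log pᵢ` (note `Real.log 0 = 0`, so `0 log 0 = 0`). -/
def IsEntropyOfMixing (Ω : Set V3) (S : V3 → ℝ) : Prop :=
  (∀ ω ∈ Set.extremePoints ℝ Ω, S ω = 0) ∧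
  ∀ (l : ℕ) (ω : Fin l → V3), (∀ j, ω j ∈ Ω) → PerfDist Ω ω →
    ∀ p : Fin l → ℝ, (∀ i, 0 ≤ p i) → (∑ i, p i) = 1 →
      S (∑ i, p i • ω i) = (∑ i, p i * S (ω i)) - ∑ i, p i * Real.log (p i)

/-- `r_n = √(1 / cos (π/n))`. -/
def rn (n : ℕ) : ℝ := Real.sqrt (1 / Real.cos (π / n))

/-- The pure states `ω_i^n` of the `n`-gon theory (indices mod `n` via periodicity). -/
def pur (n : ℕ) (i : ℤ) : V3 :=
  ![rn n * Real.cos (2 * π * i / n), rn n * Real.sin (2 * π * i / n), 1]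

/-- The `n`-gon state space `Ω_n`: the convex hull of the `n` pure states. -/
def Omega (n : ℕ) : Set V3 :=
  convexHull ℝ {x : V3 | ∃ i : Fin n, x = pur n (i : ℤ)}

/-- The extreme effect `e_i^n` for even `n`. -/
def effE (n : ℕ) (i : ℤ) : V3 →ₗ[ℝ] ℝ :=
  dotL ((1/2 : ℝ) •
    ![rn n * Real.cos ((2*i-1) * π / n), rn n * Real.sin ((2*i-1) * π / n), 1])

/-- The extreme effect `e_i^n` for odd `n`. -/
def effO (n : ℕ) (i : ℤ) : V3 →ₗ[ℝ] ℝ :=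
  dotL ((1/(1 + rn n ^ 2)) •
    ![rn n * Real.cos (2*i*π/n), rn n * Real.sin (2*i*π/n), 1])

/-- The disk state space `Ω_∞ = {(x,y,1) : x² + y² ≤ 1}`. -/
def OmegaInf : Set V3 := {x : V3 | x 2 = 1 ∧ (x 0)^2 + (x 1)^2 ≤ 1}

/-- The pure states `ω_θ^∞` of the disk theory. -/
def purInf (θ : ℝ) : V3 := ![Real.cos θ, Real.sin θ, 1]

/-- The extreme effects `e_θ^∞` of the disk theory. -/
def effInf (θ : ℝ) : V3 →ₗ[ℝ] ℝ :=
  dotL ((1/2 : ℝ) • ![Real.cos θ, Real.sin θ, 1])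

/-- The binary (1-bit Shannon) entropy `H(p) = −p log p − (1−p) log (1−p)`. -/
def H (p : ℝ) : ℝ := -(p * Real.log p) - (1 - p) * Real.log (1 - p)

/-! ### Auxiliary lemmas for `stmt17` -/

lemma dotL_apply' (v w : V3) : dotL v w = v 0 * w 0 + v 1 * w 1 + v 2 * w 2 := by
  simp [dotL, Fin.sum_univ_three]

/-- The supporting functional of the edge `[ω_m, ω_{m+1}]`: `g v = -v 0 + r_n * v 2`. -/
def gtE (n : ℕ) : V3 →ₗ[ℝ] ℝ := dotL ![(-1:ℝ), 0, rn n]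

lemma gtE_pur (n : ℕ) (i : ℤ) : gtE n (pur n i) = rn n * (1 - Real.cos (2*π*i/n)) := by
  simp [gtE, dotL_apply', pur]; ring

lemma pur_mem_of_lt (n k : ℕ) (hk : k < n) : pur n (k:ℤ) ∈ Omega n := by
  apply subset_convexHull
  exact ⟨⟨k, hk⟩, rfl⟩

lemma nR {n m : ℕ} (hm : n = 2*m+1) : (n:ℝ) = 2*(m:ℝ)+1 := by rw [hm]; push_cast; ring

lemma angm {n m : ℕ} (hm : n = 2*m+1) : 2*π*(m:ℝ)/(n:ℝ) = π - π/n := by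
  have h0 : (n:ℝ) ≠ 0 := by rw [nR hm]; positivity
  field_simp
  rw [nR hm]; ring

lemma angm1 {n m : ℕ} (hm : n = 2*m+1) : 2*π*((m:ℝ)+1)/(n:ℝ) = π + π/n := by
  have h0 : (n:ℝ) ≠ 0 := by rw [nR hm]; positivity
  field_simp
  rw [nR hm]; ring

lemma cos_bound_strict {n m : ℕ} (hn : 5 ≤ n) (hm : n = 2*m+1) (j : Fin n)
    (hj1 : (j:ℕ) ≠ m) (hj2 : (j:ℕ) ≠ m+1) :
    -Real.cos (π/n) < Real.cos (2*π*(j:ℕ)/n) := by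
  have hnpos : (0:ℝ) < n := by
    have : 0 < n := by omega
    exact_mod_cast this
  have hpin : 0 < π/(n:ℝ) := by positivity
  have hθ0 : 0 ≤ 2*π*((j:ℕ):ℝ)/n := by positivity
  rcases lt_or_ge (j:ℕ) m with h | h
  · have hjm : ((j:ℕ):ℝ) < (m:ℝ) := by exact_mod_cast h
    have hlt : 2*π*((j:ℕ):ℝ)/n < π - π/n := by
      rw [← angm hm]
      gcongr
    have := Real.cos_lt_cos_of_nonneg_of_le_pi hθ0 (by linarith [hpin]) hlt
    rwa [Real.cos_pi_sub] at this
  · have hj2' : m + 2 ≤ (j:ℕ) := by omega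
    have hjn : (j:ℕ) < n := j.isLt
    have hθle : 2*π*((j:ℕ):ℝ)/n ≤ 2*π - 2*(π/n) := by
      have hjR : ((j:ℕ):ℝ) ≤ (n:ℝ) - 1 := by
        have : ((j:ℕ):ℝ) + 1 ≤ (n:ℝ) := by exact_mod_cast hjn
        linarith
      rw [div_le_iff₀ hnpos]
      have h2 : 2*π*((j:ℕ):ℝ) ≤ 2*π*((n:ℝ)-1) := by nlinarith [pi_pos]
      calc 2*π*((j:ℕ):ℝ) ≤ 2*π*((n:ℝ)-1) := h2
        _ = (2*π - 2*(π/n)) * n := by field_simp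
    have hθgt : π + π/n < 2*π*((j:ℕ):ℝ)/n := by
      have hmono : 2*π*((m:ℝ)+2)/n ≤ 2*π*((j:ℕ):ℝ)/n := by
        gcongr
        exact_mod_cast hj2'
      have h2 : π + π/n < 2*π*((m:ℝ)+2)/n := by
        have heq : 2*π*((m:ℝ)+2)/n = π + 3*(π/n) := by
          have h0 : (n:ℝ) ≠ 0 := ne_of_gt hnpos
          field_simp
          rw [nR hm]; ring
        rw [heq]; linarith
      linarith
    have hkey := Real.cos_lt_cos_of_nonneg_of_le_pi
      (x := 2*π - 2*π*((j:ℕ):ℝ)/n) (y := π - π/n)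
      (by linarith) (by linarith [hpin]) (by linarith)
    rw [Real.cos_pi_sub, Real.cos_two_pi_sub] at hkey
    exact hkey

lemma cos_bound {n m : ℕ} (hn : 5 ≤ n) (hm : n = 2*m+1) (j : Fin n) :
    -Real.cos (π/n) ≤ Real.cos (2*π*(j:ℕ)/n) := by
  by_cases h1 : (j:ℕ) = m
  · rw [h1, angm hm, Real.cos_pi_sub]
  · by_cases h2 : (j:ℕ) = m+1
    · rw [h2]
      push_cast
      rw [angm1 hm, show π + π/(n:ℝ) = π - -(π/n) by ring, Real.cos_pi_sub, Real.cos_neg]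
    · exact le_of_lt (cos_bound_strict hn hm j h1 h2)

lemma cos_pin_pos {n : ℕ} (hn : 5 ≤ n) : 0 < Real.cos (π/n) := by
  have hnpos : (0:ℝ) < n := by
    have : 0 < n := by omega
    exact_mod_cast this
  have h2 : π/(n:ℝ) < π/2 := by
    apply div_lt_div_of_pos_left pi_pos (by norm_num)
    exact_mod_cast (by omega : 2 < n)
  have hpin : 0 < π/(n:ℝ) := by positivity
  exact Real.cos_pos_of_mem_Ioo ⟨by linarith [pi_pos], h2⟩

lemma rn_pos {n : ℕ} (hn : 5 ≤ n) : 0 < rn n := by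
  have hc := cos_pin_pos hn
  rw [rn]
  positivity

lemma face {n m : ℕ} (hn : 5 ≤ n) (hm : n = 2*m+1) (σ : V3) (hσ : σ ∈ Omega n)
    (hgt : gtE n σ = rn n * (1 + Real.cos (π/n))) :
    σ ∈ segment ℝ (pur n (m:ℤ)) (pur n ((m:ℤ)+1)) := by
  set M := rn n * (1 + Real.cos (π/n)) with hM
  have hr := rn_pos hn
  rw [Omega, convexHull_eq] at hσ
  obtain ⟨ι, t, w, z, hw0, hw1, hzS, hcm⟩ := hσ
  have hσeq : σ = ∑ i ∈ t, w i • z i := by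
    rw [← hcm, Finset.centerMass_eq_of_sum_1 _ _ hw1]
  have hle : ∀ i ∈ t, gtE n (z i) ≤ M := by
    intro i hi
    obtain ⟨j, hj⟩ := hzS i hi
    rw [hj, gtE_pur]
    have hb := cos_bound hn hm j
    have hcast : ((j:ℤ):ℝ) = ((j:ℕ):ℝ) := by push_cast; rfl
    rw [hcast, hM]
    nlinarith [hr, hb]
  have hgσ : gtE n σ = ∑ i ∈ t, w i * gtE n (z i) := by
    rw [hσeq, map_sum]; simp [smul_eq_mul]
  have hsum0 : ∑ i ∈ t, w i * (M - gtE n (z i)) = 0 := by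
    have e1 : ∑ i ∈ t, w i * (M - gtE n (z i))
        = (∑ i ∈ t, w i) * M - ∑ i ∈ t, w i * gtE n (z i) := by
      rw [Finset.sum_mul, ← Finset.sum_sub_distrib]
      congr 1; ext i; ring
    rw [e1, hw1, ← hgσ, hgt, one_mul, sub_self]
  have hzero : ∀ i ∈ t, w i ≠ 0 → gtE n (z i) = M := by
    intro i hi hwi
    have hterm := (Finset.sum_eq_zero_iff_of_nonneg (fun i hi => by
      have h1 := hle i hi
      have h2 := hw0 i hi
      nlinarith)).1 hsum0 i hi
    rcases mul_eq_zero.1 hterm with h | h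
    · exact absurd h hwi
    · linarith
  have hmem : ∀ i ∈ t, w i ≠ 0 → z i ∈ ({pur n (m:ℤ), pur n ((m:ℤ)+1)} : Set V3) := by
    intro i hi hwi
    obtain ⟨j, hj⟩ := hzS i hi
    by_cases h1 : (j:ℕ) = m
    · have hjz : ((j:ℕ):ℤ) = (m:ℤ) := by exact_mod_cast h1
      left; rw [hj, hjz]
    by_cases h2 : (j:ℕ) = m+1
    · have hjz : ((j:ℕ):ℤ) = (m:ℤ)+1 := by exact_mod_cast h2
      right; rw [hj, hjz]
      exact Set.mem_singleton _
    exfalso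
    have hstrict := cos_bound_strict hn hm j h1 h2
    have heq := hzero i hi hwi
    rw [hj, gtE_pur] at heq
    have hcast : ((j:ℤ):ℝ) = ((j:ℕ):ℝ) := by push_cast; rfl
    rw [hcast, hM] at heq
    nlinarith [hr, hstrict]
  have hfinal : σ ∈ convexHull ℝ ({pur n (m:ℤ), pur n ((m:ℤ)+1)} : Set V3) := by
    rw [← hcm, ← Finset.centerMass_filter_ne_zero (z := z)]
    apply Finset.centerMass_mem_convexHull
    · intro i hi
      exact hw0 i (Finset.mem_filter.1 hi).1
    · rw [Finset.sum_filter_ne_zero, hw1]; norm_num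
    · intro i hi
      have hi' := Finset.mem_filter.1 hi
      exact hmem i hi'.1 hi'.2
  rwa [convexHull_pair] at hfinal

lemma keyvec {n m : ℕ} (hn : 5 ≤ n) (hm : n = 2*m+1) :
    pur n 1 - pur n ((n:ℤ)-1) = (2*Real.cos (π/n)) • (pur n (m:ℤ) - pur n ((m:ℤ)+1)) := by
  have hnpos : (0:ℝ) < n := by
    have : 0 < n := by omega
    exact_mod_cast this
  have h0 : (n:ℝ) ≠ 0 := ne_of_gt hnpos
  have en1 : 2*π*((n:ℝ)-1)/(n:ℝ) = 2*π - 2*(π/n) := by field_simp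
  have e1 : 2*π/(n:ℝ) = 2*(π/n) := by ring
  have hcplus : Real.cos (π + π/(n:ℝ)) = -Real.cos (π/n) := by
    rw [show π + π/(n:ℝ) = π - -(π/n) by ring, Real.cos_pi_sub, Real.cos_neg]
  have hsplus : Real.sin (π + π/(n:ℝ)) = -Real.sin (π/n) := by
    rw [show π + π/(n:ℝ) = π - -(π/n) by ring, Real.sin_pi_sub, Real.sin_neg]
  funext i
  fin_cases i
  · simp only [pur]
    simp
    rw [en1, e1, Real.cos_two_pi_sub, angm hm, angm1 hm, Real.cos_pi_sub, hcplus]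
    ring
  · simp only [pur]
    simp
    rw [en1, e1, Real.sin_two_pi_sub, angm hm, angm1 hm, Real.sin_pi_sub, hsplus,
      Real.sin_two_mul]
    ring
  · simp only [pur]
    simp

/-- For odd `n ≥ 5`, the state `ω_A = ½(ω_{(n−1)/2}^n + ω_{(n+1)/2}^n)` cannot be
written as a convex combination of perfectly distinguishable pure states of `Ω_n`. -/
theorem stmt17 (n : ℕ) (hn : 5 ≤ n) (m : ℕ) (hm : n = 2 * m + 1) :
    ¬ ∃ (l : ℕ) (σ : Fin l → V3) (p : Fin l → ℝ),
        (∀ k, σ k ∈ Set.extremePoints ℝ (Omega n)) ∧ PerfDist (Omega n) σ ∧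
        (∀ k, 0 ≤ p k) ∧ (∑ k, p k) = 1 ∧
        (1/2 : ℝ) • (pur n m + pur n (m + 1)) = ∑ k, p k • σ k := by
  rintro ⟨l, σ, p, hext, hPD, hp0, hp1, hsum⟩
  have hnpos : (0:ℝ) < n := by
    have : 0 < n := by omega
    exact_mod_cast this
  have hr := rn_pos hn
  have hcpos := cos_pin_pos hn
  have hpin : 0 < π/(n:ℝ) := by positivity
  have hchalf : 1/2 < Real.cos (π/(n:ℝ)) := by
    have hlt : π/(n:ℝ) < π/3 := by
      apply div_lt_div_of_pos_left pi_pos (by norm_num)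
      exact_mod_cast (by omega : 3 < n)
    have := Real.cos_lt_cos_of_nonneg_of_le_pi (le_of_lt hpin) (by linarith [pi_pos]) hlt
    rw [Real.cos_pi_div_three] at this
    linarith
  have hsin : 0 < Real.sin (π/(n:ℝ)) :=
    Real.sin_pos_of_pos_of_lt_pi hpin (by
      have h2 : π/(n:ℝ) < π/2 := by
        apply div_lt_div_of_pos_left pi_pos (by norm_num)
        exact_mod_cast (by omega : 2 < n)
      linarith [pi_pos])
  -- memberships
  have hmemm : pur n (m:ℤ) ∈ Omega n := pur_mem_of_lt n m (by omega)
  have hmemm1 : pur n ((m:ℤ)+1) ∈ Omega n := by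
    have := pur_mem_of_lt n (m+1) (by omega)
    rwa [show ((m+1:ℕ):ℤ) = (m:ℤ)+1 by push_cast; ring] at this
  have hmem1 : pur n (1:ℤ) ∈ Omega n := by
    have := pur_mem_of_lt n 1 (by omega)
    rwa [Nat.cast_one] at this
  have hmemn1 : pur n ((n:ℤ)-1) ∈ Omega n := by
    have := pur_mem_of_lt n (n-1) (by omega)
    rwa [show ((n-1:ℕ):ℤ) = (n:ℤ)-1 by omega] at this
  -- gtE values on the two edge points
  have hgtm : gtE n (pur n (m:ℤ)) = rn n * (1 + Real.cos (π/n)) := by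
    rw [gtE_pur, show (((m:ℤ)):ℝ) = (m:ℝ) by push_cast; rfl, angm hm, Real.cos_pi_sub]
    ring
  have hgtm1 : gtE n (pur n ((m:ℤ)+1)) = rn n * (1 + Real.cos (π/n)) := by
    rw [gtE_pur]
    push_cast
    rw [angm1 hm, show π + π/(n:ℝ) = π - -(π/n) by ring, Real.cos_pi_sub, Real.cos_neg]
    ring
  -- gtE value on ω_A
  have hA : gtE n (∑ k, p k • σ k) = rn n * (1 + Real.cos (π/n)) := by
    rw [← hsum, map_smul, map_add, hgtm, hgtm1, smul_eq_mul]
    ring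
  -- every σ k satisfies the face bound
  have hleσ : ∀ k, gtE n (σ k) ≤ rn n * (1 + Real.cos (π/n)) := by
    intro k
    have hk : σ k ∈ Omega n := (hext k).1
    have hsub : Omega n ⊆ {x : V3 | gtE n x ≤ rn n * (1 + Real.cos (π/n))} := by
      apply convexHull_min
      · rintro x ⟨j, rfl⟩
        have hb := cos_bound hn hm j
        have hcast : ((j:ℤ):ℝ) = ((j:ℕ):ℝ) := by push_cast; rfl
        simp only [Set.mem_setOf_eq]
        rw [gtE_pur, hcast]
        nlinarith [hr, hb]
      · exact convex_halfSpace_le (LinearMap.isLinear (gtE n)) _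
    exact hsub hk
  -- positive-weight σ's attain the bound
  have hfacek : ∀ k, p k ≠ 0 → gtE n (σ k) = rn n * (1 + Real.cos (π/n)) := by
    intro k hk
    have hgσ : gtE n (∑ k, p k • σ k) = ∑ k, p k * gtE n (σ k) := by
      rw [map_sum]; simp [smul_eq_mul]
    have hsum0 : ∑ k, p k * (rn n * (1 + Real.cos (π/n)) - gtE n (σ k)) = 0 := by
      have e1 : ∑ k, p k * (rn n * (1 + Real.cos (π/n)) - gtE n (σ k))
          = (∑ k, p k) * (rn n * (1 + Real.cos (π/n))) - ∑ k, p k * gtE n (σ k) := by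
        rw [Finset.sum_mul, ← Finset.sum_sub_distrib]
        congr 1; ext i; ring
      rw [e1, hp1, ← hgσ, hA, one_mul, sub_self]
    have hterm := (Finset.sum_eq_zero_iff_of_nonneg (fun i _ => by
      have h1 := hleσ i
      have h2 := hp0 i
      nlinarith)).1 hsum0 k (Finset.mem_univ k)
    rcases mul_eq_zero.1 hterm with h | h
    · exact absurd h hk
    · linarith
  have hseg : ∀ k, p k ≠ 0 → σ k ∈ segment ℝ (pur n (m:ℤ)) (pur n ((m:ℤ)+1)) :=
    fun k hk => face hn hm _ (hext k).1 (hfacek k hk)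
  -- pur n m ≠ pur n (m+1)
  have hne : pur n (m:ℤ) ≠ pur n ((m:ℤ)+1) := by
    intro h
    have h1 := congrFun h 1
    simp only [pur, Matrix.cons_val_one, Matrix.head_cons] at h1
    push_cast at h1
    rw [angm hm, angm1 hm, Real.sin_pi_sub, show π + π/(n:ℝ) = π - -(π/n) by ring,
      Real.sin_pi_sub, Real.sin_neg] at h1
    nlinarith [hr, hsin]
  -- there are two distinct positive weights
  have hex1 : ∃ k, p k ≠ 0 := by
    by_contra h
    push_neg at h
    rw [Finset.sum_eq_zero (fun k _ => h k)] at hp1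
    norm_num at hp1
  obtain ⟨k₁, hk₁⟩ := hex1
  have hex2 : ∃ k₂, k₂ ≠ k₁ ∧ p k₂ ≠ 0 := by
    by_contra h
    push_neg at h
    have hall : ∀ k, k ≠ k₁ → p k = 0 := fun k hk => h k hk
    have hpk1 : p k₁ = 1 := by
      rw [← hp1, Finset.sum_eq_single k₁ (fun b _ hb => hall b hb)
        (fun h' => absurd (Finset.mem_univ k₁) h')]
    have hσk1 : σ k₁ = (1/2 : ℝ) • (pur n (m:ℤ) + pur n ((m:ℤ)+1)) := by
      rw [hsum, Finset.sum_eq_single k₁ (fun b _ hb => by rw [hall b hb, zero_smul])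
        (fun h' => absurd (Finset.mem_univ k₁) h'), hpk1, one_smul]
    have hop : σ k₁ ∈ openSegment ℝ (pur n (m:ℤ)) (pur n ((m:ℤ)+1)) := by
      refine ⟨1/2, 1/2, by norm_num, by norm_num, by norm_num, ?_⟩
      rw [hσk1, smul_add]
    have hboth := (hext k₁).2 hmemm hmemm1 hop
    exact hne (hboth.trans ((hext k₁).2 hmemm1 hmemm (by rw [openSegment_symm]; exact hop)).symm)
  obtain ⟨k₂, hk₂ne, hk₂⟩ := hex2
  obtain ⟨e, heEff, -, heδ⟩ := hPD
  set f := e k₁ with hf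
  have hf1 : f (σ k₁) = 1 := by
    have := heδ k₁ k₁; simpa using this
  have hf2 : f (σ k₂) = 0 := by
    have := heδ k₁ k₂
    rwa [if_neg (fun hc => hk₂ne hc.symm)] at this
  set E₀ := f (pur n (m:ℤ)) with hE₀def
  set E₁ := f (pur n ((m:ℤ)+1)) with hE₁def
  have hE₀ := heEff k₁ _ hmemm
  have hE₁ := heEff k₁ _ hmemm1
  obtain ⟨a, b, ha, hb, hab, hrep⟩ := hseg k₁ hk₁
  obtain ⟨a', b', ha', hb', hab', hrep'⟩ := hseg k₂ hk₂
  have h1 : a*E₀ + b*E₁ = 1 := by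
    rw [← hf1, ← hrep]
    simp [map_add, map_smul, smul_eq_mul, hE₀def, hE₁def]
  have h0 : a'*E₀ + b'*E₁ = 0 := by
    rw [← hf2, ← hrep']
    simp [map_add, map_smul, smul_eq_mul, hE₀def, hE₁def]
  -- the key linear identity
  have hkey : f (pur n 1) - f (pur n ((n:ℤ)-1)) = 2*Real.cos (π/n)*(E₀ - E₁) := by
    have hv := keyvec hn hm
    have := congrArg f hv
    rw [map_sub, map_smul, smul_eq_mul, map_sub] at this
    rw [this]
  have hb1 := heEff k₁ _ hmem1
  have hbn1 := heEff k₁ _ hmemn1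
  rcases le_total E₀ E₁ with hE | hE
  · have haE : a*E₀ ≤ a*E₁ := mul_le_mul_of_nonneg_left hE ha
    have hbE : b'*E₀ ≤ b'*E₁ := mul_le_mul_of_nonneg_left hE hb'
    have hsum1 : a*E₁ + b*E₁ = E₁ := by rw [← add_mul, hab, one_mul]
    have hsum2 : a'*E₀ + b'*E₀ = E₀ := by rw [← add_mul, hab', one_mul]
    -- E₁ ≥ 1, E₀ ≤ 0, hence E₀ - E₁ = -1 exactly
    have hE₁ge : 1 ≤ E₁ := by linarith
    have hE₀le : E₀ ≤ 0 := by linarith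
    have hdiff : E₀ - E₁ = -1 := by linarith [hE₀.1, hE₁.2]
    rw [hdiff] at hkey
    linarith [hb1.1, hbn1.2]
  · have haE : a'*E₁ ≤ a'*E₀ := mul_le_mul_of_nonneg_left hE ha'
    have hbE : b*E₁ ≤ b*E₀ := mul_le_mul_of_nonneg_left hE hb
    have hsum1 : a*E₀ + b*E₀ = E₀ := by rw [← add_mul, hab, one_mul]
    have hsum2 : a'*E₁ + b'*E₁ = E₁ := by rw [← add_mul, hab', one_mul]
    have hE₀ge : 1 ≤ E₀ := by linarith
    have hE₁le : E₁ ≤ 0 := by linarith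
    have hdiff : E₀ - E₁ = 1 := by linarith [hE₁.1, hE₀.2]
    rw [hdiff] at hkey
    linarith [hb1.2, hbn1.1]
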